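/- arXiv:1801.04483 — 8 statements merged into one kernel-verified Lean document; each statement's English description precedes it below -/
import Mathlib

section
/- Let b ≥ 2 and k ≥ 1 be integers. A positive integer d divides every element of S_k^b if and only if d divides E_k = gcd((b^k − 1)/(b − 1), k). In other words, the greatest common divisor of the set S_k^b of base-b k'th powers equals E_k. -/
/-! The repunit `1 + b + ⋯ + b^(k-1) = ckb b k 1` is a base-`b` `k`'th power, and so is
`(a + 1) * ckb b k n` together with `a * ckb b k n` for `a = b^(n-1)`, `n ≥ 2`; hence every common
divisor `d` divides `ckb b k 1` and `ckb b k (2k)`. Since `ckb b k 1 ∣ b^k - 1 ∣ b^(2k) - 1`, and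
`∑ i < k, y^i ≡ k` modulo `y - 1`, this forces `d ∣ k`.

Conversely, let `p^e ∣ d` with `d ∣ ckb b k 1` and `d ∣ k`, and put `y = b^n`. If `p ∣ y - 1`, then
`p^e ∣ ∑ i < k, y^i` already because `p^e ∣ k`: splitting a geometric sum of length `p m` as
`(∑ i < p, y^i) (∑ j < m, (y^p)^j)` gains one factor `p` at a time. If `p ∤ y - 1`, then `p^e`
divides `ckb b k 1 ∣ y^k - 1 = (y - 1) ∑ i < k, y^i`, hence the sum. -/

/-- `ckb b k n = 1 + b^n + b^(2n) + ⋯ + b^((k-1)n)`, i.e., `(b^(kn) - 1)/(b^n - 1)` for `n ≥ 1`. -/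
def ckb (b k n : ℕ) : ℕ := ∑ i ∈ Finset.range k, b ^ (i * n)

/-- `m` is a base-`b` `k`'th power: `m = a * ckb b k n` for some `n ≥ 1` and
`b^(n-1) ≤ a < b^n`. -/
def IsBaseKthPower (b k m : ℕ) : Prop :=
  ∃ n a : ℕ, 1 ≤ n ∧ b ^ (n - 1) ≤ a ∧ a < b ^ n ∧ m = a * ckb b k n

open Finset

section GeomSum

variable {R : Type*}

theorem geom_sum_range_mul [Semiring R] (x : R) (m n : ℕ) :
    ∑ i ∈ range (m * n), x ^ i = (∑ i ∈ range n, x ^ i) * ∑ j ∈ range m, (x ^ n) ^ j := by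
  induction m with
  | zero => simp
  | succ m ih =>
    rw [Nat.succ_mul, sum_range_add, ih, sum_range_succ, mul_add, ← pow_mul]
    congr 1
    rw [sum_mul]
    exact sum_congr rfl fun i _ => by rw [← pow_add, add_comm, mul_comm n m]

variable [CommRing R]

theorem sub_one_dvd_geom_sum_sub_natCast (x : R) (n : ℕ) :
    x - 1 ∣ ∑ i ∈ range n, x ^ i - n := by
  have : ∑ i ∈ range n, x ^ i - n = ∑ i ∈ range n, (x ^ i - 1) := by
    simp [sum_sub_distrib]
  rw [this]
  exact dvd_sum fun i _ => sub_one_dvd_pow_sub_one x i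

theorem natCast_dvd_geom_sum_of_dvd_sub_one {q : ℕ} {x : R} (hx : (q : R) ∣ x - 1) :
    (q : R) ∣ ∑ i ∈ range q, x ^ i := by
  simpa using dvd_add (hx.trans (sub_one_dvd_geom_sum_sub_natCast x q)) (dvd_refl (q : R))

theorem pow_dvd_geom_sum_of_dvd_sub_one {q e m : ℕ} {x : R} (hx : (q : R) ∣ x - 1)
    (hm : q ^ e ∣ m) : (q : R) ^ e ∣ ∑ i ∈ range m, x ^ i := by
  induction e generalizing x m with
  | zero => simp
  | succ e ih =>
    obtain ⟨m', rfl⟩ := hm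
    have hxq : (q : R) ∣ x ^ q - 1 := hx.trans (sub_one_dvd_pow_sub_one x q)
    rw [show q ^ (e + 1) * m' = q ^ e * m' * q by ring, geom_sum_range_mul, pow_succ']
    exact mul_dvd_mul (natCast_dvd_geom_sum_of_dvd_sub_one hx) (ih hxq (dvd_mul_right _ _))

theorem dvd_natCast_of_dvd_geom_sum {d x : R} {k n : ℕ} (hS : d ∣ ∑ i ∈ range k, x ^ i)
    (hSpow : d ∣ ∑ i ∈ range k, (x ^ (k * n)) ^ i) : d ∣ (k : R) := by
  have hd : d ∣ x ^ (k * n) - 1 :=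
    (hS.trans (Dvd.intro _ (geom_sum_mul x k))).trans (pow_one_sub_dvd_pow_mul_sub_one x k n)
  have := dvd_sub hSpow (hd.trans (sub_one_dvd_geom_sum_sub_natCast _ k))
  rwa [sub_sub_cancel] at this

end GeomSum

theorem prime_pow_dvd_geom_sum_pow {x : ℤ} {p e k : ℕ} (hp : p.Prime)
    (hS : (p : ℤ) ^ e ∣ ∑ i ∈ range k, x ^ i) (hk : p ^ e ∣ k) (n : ℕ) :
    (p : ℤ) ^ e ∣ ∑ i ∈ range k, (x ^ n) ^ i := by
  by_cases hpx : (p : ℤ) ∣ x ^ n - 1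
  · exact pow_dvd_geom_sum_of_dvd_sub_one hpx hk
  · refine (Nat.prime_iff_prime_int.mp hp).pow_dvd_of_dvd_mul_right e hpx ?_
    rw [geom_sum_mul, ← pow_mul, mul_comm, pow_mul]
    exact (hS.trans (Dvd.intro _ (geom_sum_mul x k))).trans (sub_one_dvd_pow_sub_one _ n)

theorem natCast_dvd_geom_sum_pow {x : ℤ} {d k : ℕ} (hS : (d : ℤ) ∣ ∑ i ∈ range k, x ^ i)
    (hk : d ∣ k) (n : ℕ) : (d : ℤ) ∣ ∑ i ∈ range k, (x ^ n) ^ i := by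
  rw [Int.natCast_dvd, Nat.dvd_iff_prime_pow_dvd_dvd]
  intro p e hp hpe
  rw [← Int.natCast_dvd, Nat.cast_pow]
  exact prime_pow_dvd_geom_sum_pow hp ((Int.natCast_dvd_natCast.mpr hpe).trans hS) (hpe.trans hk) n

theorem natCast_ckb (b k n : ℕ) : (ckb b k n : ℤ) = ∑ i ∈ range k, ((b : ℤ) ^ n) ^ i := by
  simp only [ckb, Nat.cast_sum, Nat.cast_pow, ← pow_mul, mul_comm n]

theorem isBaseKthPower_ckb_one {b : ℕ} (k : ℕ) (hb : 1 < b) : IsBaseKthPower b k (ckb b k 1) :=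
  ⟨1, 1, le_rfl, by simp, by simpa using hb, (one_mul _).symm⟩

theorem dvd_ckb_of_forall_isBaseKthPower_dvd {b k d n : ℕ} (hb : 1 < b) (hn : 2 ≤ n)
    (h : ∀ m, IsBaseKthPower b k m → d ∣ m) : d ∣ ckb b k n := by
  have hlt : b ^ (n - 1) + 1 < b ^ n := by
    have : b ≤ b ^ (n - 1) := Nat.le_self_pow (by omega) b
    have := pow_sub_one_mul (by omega : n ≠ 0) b
    nlinarith
  have h₁ := h _ ⟨n, b ^ (n - 1), by omega, le_rfl, by omega, rfl⟩
  have h₂ := h _ ⟨n, b ^ (n - 1) + 1, by omega, by omega, hlt, rfl⟩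
  rw [add_mul, one_mul] at h₂
  exact (Nat.dvd_add_right h₁).mp h₂

theorem gcd_baseKthPowers_general (b k : ℕ) (hb : 2 ≤ b) (hk : 1 ≤ k) (d : ℕ) :
    (∀ m : ℕ, IsBaseKthPower b k m → d ∣ m) ↔ d ∣ Nat.gcd ((b ^ k - 1) / (b - 1)) k := by
  have hdvd_ckb (n : ℕ) : d ∣ ckb b k n ↔ (d : ℤ) ∣ ∑ i ∈ range k, ((b : ℤ) ^ n) ^ i := by
    rw [← natCast_ckb, Int.natCast_dvd_natCast]
  have hrepunit : ∑ i ∈ range k, b ^ i = ckb b k 1 := by simp [ckb]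
  rw [← Nat.geomSum_eq hb, Nat.dvd_gcd_iff, hrepunit, hdvd_ckb 1, pow_one]
  constructor
  · intro h
    have hdS := (hdvd_ckb 1).mp (h _ (isBaseKthPower_ckb_one k hb))
    have hdSpow := (hdvd_ckb (k * 2)).mp (dvd_ckb_of_forall_isBaseKthPower_dvd hb (by omega) h)
    rw [pow_one] at hdS
    exact ⟨hdS, Int.natCast_dvd_natCast.mp (dvd_natCast_of_dvd_geom_sum hdS hdSpow)⟩
  · rintro ⟨hdS, hdk⟩ m ⟨n, a, -, -, -, rfl⟩
    exact ((hdvd_ckb n).mpr (natCast_dvd_geom_sum_pow hdS hdk n)).mul_left a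

/-- A positive integer `d` divides every base-`b` `k`'th power iff `d` divides
`E_k = gcd((b^k - 1)/(b - 1), k)`; i.e., the gcd of `S_k^b` equals `E_k`. -/
theorem gcd_baseKthPowers (b k : ℕ) (hb : 2 ≤ b) (hk : 1 ≤ k) (d : ℕ) (hd : 0 < d) :
    (∀ m : ℕ, IsBaseKthPower b k m → d ∣ m) ↔ d ∣ Nat.gcd ((b ^ k - 1) / (b - 1)) k :=
  gcd_baseKthPowers_general b k hb hk d
end

section
/- Let b ≥ 2 and k ≥ 1 be integers. A positive integer d divides c_k^b(n) for every n ≥ 1 if and only if d divides c_k^b(n) for every n with 1 ≤ n ≤ k. In other words, gcd{ c_k^b(n) : n ≥ 1 } = gcd(c_k^b(1), c_k^b(2), …, c_k^b(k)). -/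
/-!
If `d ∣ c_k^b(1) = 1 + b + ⋯ + b^(k-1)`, then `d ∣ (b - 1) c_k^b(1) = b^k - 1`, so `b^k ≡ 1 (mod d)`.
Every term `b^(i n)` of `c_k^b(n)` is then unchanged mod `d` when `n` is replaced by `n + k`,
so `n ↦ c_k^b(n) mod d` has period `k` and all its values at `n ≥ 1` occur among `n = 1, …, k`.
-/

open Finset Function

theorem pow_eq_one_of_geom_sum_eq_zero {R : Type*} [Ring R] {x : R} {k : ℕ}
    (h : ∑ i ∈ range k, x ^ i = 0) : x ^ k = 1 := by
  rw [← sub_eq_zero, ← geom_sum_mul, h, zero_mul]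

theorem periodic_sum_pow_mul_of_pow_eq_one {R : Type*} [CommSemiring R] {x : R} {k : ℕ}
    (hx : x ^ k = 1) (j : ℕ) : Periodic (fun n ↦ ∑ i ∈ range j, x ^ (i * n)) k := by
  intro n
  simp only [mul_add, pow_add, mul_comm _ k, pow_mul, hx, one_pow, mul_one]

theorem Function.Periodic.exists_eq_of_one_le {α : Type*} {f : ℕ → α} {k : ℕ}
    (hf : Periodic f k) (hk : 0 < k) {n : ℕ} (hn : 1 ≤ n) : ∃ m, 1 ≤ m ∧ m ≤ k ∧ f m = f n := by
  refine ⟨(n - 1) % k + 1, by omega, Nat.mod_lt (n - 1) hk, ?_⟩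
  rw [(hf.add_const 1).map_mod_nat, Nat.sub_add_cancel hn]

theorem cast_ckb (R : Type*) [CommSemiring R] (b k n : ℕ) :
    (ckb b k n : R) = ∑ i ∈ range k, (b : R) ^ (i * n) := by
  simp [ckb]

theorem periodic_ckb_cast_of_dvd {b k d : ℕ} (h : d ∣ ckb b k 1) :
    Periodic (fun n ↦ (ckb b k n : ZMod d)) k := by
  have hgeom : ∑ i ∈ range k, (b : ZMod d) ^ i = 0 := by
    simpa [cast_ckb] using (ZMod.natCast_eq_zero_iff _ _).mpr h
  simpa only [cast_ckb] using
    periodic_sum_pow_mul_of_pow_eq_one (pow_eq_one_of_geom_sum_eq_zero hgeom) k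

theorem gcd_ckb_eq_gcd_first_k_general (b k : ℕ) (hk : 1 ≤ k) (d : ℕ) :
    (∀ n : ℕ, 1 ≤ n → d ∣ ckb b k n) ↔ ∀ n : ℕ, 1 ≤ n → n ≤ k → d ∣ ckb b k n := by
  refine ⟨fun H n hn _ ↦ H n hn, fun H n hn ↦ ?_⟩
  obtain ⟨m, hm1, hmk, hfm⟩ :=
    (periodic_ckb_cast_of_dvd (H 1 le_rfl hk)).exists_eq_of_one_le hk hn
  rw [← ZMod.natCast_eq_zero_iff, ← hfm, ZMod.natCast_eq_zero_iff]
  exact H m hm1 hmk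

/-- A positive integer `d` divides `c_k^b(n)` for all `n ≥ 1` iff it divides `c_k^b(n)` for
`1 ≤ n ≤ k`; i.e., `gcd{c_k^b(n) : n ≥ 1} = gcd(c_k^b(1), …, c_k^b(k))`. -/
theorem gcd_ckb_eq_gcd_first_k (b k : ℕ) (hb : 2 ≤ b) (hk : 1 ≤ k) (d : ℕ) (hd : 0 < d) :
    (∀ n : ℕ, 1 ≤ n → d ∣ ckb b k n) ↔ ∀ n : ℕ, 1 ≤ n → n ≤ k → d ∣ ckb b k n :=
  gcd_ckb_eq_gcd_first_k_general b k hk d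
end

section
/- Let b ≥ 2 and k, n ≥ 1 be integers and let a = n mod k. Then c_k^b(n) ≡ c_k^b(a) (mod c_k^b(1)), where in the case a = 0 one has c_k^b(0) = k. -/
theorem natCast_pow_eq_one_zmod_ckb_one (b k : ℕ) : (b : ZMod (ckb b k 1)) ^ k = 1 := by
  have hc : ((∑ i ∈ Finset.range k, b ^ i : ℕ) : ZMod (ckb b k 1)) = 0 :=
    (ZMod.natCast_eq_zero_iff _ _).2 (by simp [ckb])
  have h := geom_sum_mul (b : ZMod (ckb b k 1)) k
  push_cast at hc
  rwa [hc, zero_mul, eq_comm, sub_eq_zero] at h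

theorem ckb_modEq_of_modEq {b k n n' : ℕ} (h : n ≡ n' [MOD k]) :
    ckb b k n ≡ ckb b k n' [MOD ckb b k 1] :=
  Nat.ModEq.sum fun i _ => (ZMod.natCast_eq_natCast_iff _ _ _).1 <| by
    push_cast
    exact pow_eq_pow_of_modEq (h.mul_left i) (natCast_pow_eq_one_zmod_ckb_one b k)

theorem ckb_modEq_ckb_mod_general (b k n : ℕ) :
    ckb b k n ≡ ckb b k (n % k) [MOD ckb b k 1] :=
  ckb_modEq_of_modEq (Nat.mod_modEq n k).symm

/-- For `b ≥ 2`, `k, n ≥ 1` and `a = n mod k`, we have `c_k^b(n) ≡ c_k^b(a) (mod c_k^b(1))`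
(where `c_k^b(0) = k`). -/
theorem ckb_modEq_ckb_mod (b k n : ℕ) (hb : 2 ≤ b) (hk : 1 ≤ k) (hn : 1 ≤ n) :
    ckb b k n ≡ ckb b k (n % k) [MOD ckb b k 1] :=
  ckb_modEq_ckb_mod_general b k n
end

section
/- Let k ≥ 1 be an integer. There exist a positive integer W(k) and a threshold N_0 such that every integer N ≥ N_0 that is a multiple of E_k = gcd(2^k − 1, k) can be written as the sum of at most W(k) binary k'th powers (elements of S_k). -/
/-!
Take `n` divisible by `k` and `P = 2 ^ n`. The numbers `ck k (n + j)`, `j < k`, are the entries of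
`u ᵥ* V` for `u = (P ^ i)ᵢ` and the Vandermonde matrix `V = (2 ^ (i * j))`, so multiplying by the
adjugate of `V` writes `det V * Q` as an integer combination of them with coefficients `O(P)`
whenever `Q = O(P ^ k)`: expand `Q` in base `P`. Bézout in `ck k n` and `ck k (n + 1)`, whose gcd
divides `E_k` when `k ∣ n`, fixes the residue modulo `det V`, so every multiple `R` of `E_k` with
`R = O(P ^ k)` is such a combination as well. For `N` between two constant multiples of `P ^ k`,
write `N = C * E_k * P * ∑ j, ck k (n + j) + R` by Euclidean division; then
`N = ∑ j, A j * ck k (n + j)` with every `A j` between `2 ^ (n + j)` and a constant times `P`, and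
each `A j * ck k (n + j)` splits into boundedly many binary `k`'th powers with exponent `n + j`.
-/

/-- `ck k n = 1 + 2^n + 2^(2n) + ⋯ + 2^((k-1)n)`. -/
def ck (k n : ℕ) : ℕ := ∑ i ∈ Finset.range k, 2 ^ (i * n)

/-- `m` is a binary `k`'th power: `m = a * ck k n` for some `n ≥ 1` and `2^(n-1) ≤ a < 2^n`. -/
def IsBinaryKthPower (k m : ℕ) : Prop :=
  ∃ n a : ℕ, 1 ≤ n ∧ 2 ^ (n - 1) ≤ a ∧ a < 2 ^ n ∧ m = a * ck k n

open Finset Matrix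

lemma ck_eq_sum_pow (k n : ℕ) : ck k n = ∑ i ∈ range k, (2 ^ n) ^ i := by
  simp only [ck, ← pow_mul, mul_comm]

lemma ck_dvd_two_pow_sub_one (k n : ℕ) : ck k n ∣ 2 ^ (k * n) - 1 := by
  refine ⟨2 ^ n - 1, ?_⟩
  zify [Nat.one_le_two_pow]
  rw [ck_eq_sum_pow, mul_comm k, pow_mul]
  push_cast
  exact (geom_sum_mul _ _).symm

lemma ck_modEq (k n : ℕ) : ck k n ≡ k [MOD 2 ^ n - 1] := by
  have h : 2 ^ n ≡ 1 [MOD 2 ^ n - 1] := ((Nat.modEq_iff_dvd' Nat.one_le_two_pow).2 dvd_rfl).symm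
  calc ck k n = ∑ i ∈ range k, (2 ^ n) ^ i := ck_eq_sum_pow k n
    _ ≡ ∑ i ∈ range k, 1 ^ i [MOD 2 ^ n - 1] := Nat.ModEq.sum fun i _ => h.pow i
    _ = k := by simp

lemma gcd_ck_ck_succ_dvd {k n : ℕ} (h : k ∣ n) :
    Nat.gcd (ck k n) (ck k (n + 1)) ∣ Nat.gcd (2 ^ k - 1) k := by
  set g := Nat.gcd (ck k n) (ck k (n + 1))
  have h2k : g ∣ 2 ^ k - 1 := by
    have : Nat.gcd (2 ^ (k * n) - 1) (2 ^ (k * (n + 1)) - 1) = 2 ^ k - 1 := by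
      rw [Nat.pow_sub_one_gcd_pow_sub_one, mul_add_one, Nat.gcd_self_add_right,
        Nat.gcd_mul_right_left]
    exact this ▸ Nat.dvd_gcd ((Nat.gcd_dvd_left _ _).trans (ck_dvd_two_pow_sub_one k n))
      ((Nat.gcd_dvd_right _ _).trans (ck_dvd_two_pow_sub_one k (n + 1)))
  have hmod : ck k n ≡ k [MOD g] :=
    (ck_modEq k n).of_dvd (h2k.trans (Nat.pow_sub_one_dvd_pow_sub_one 2 h))
  exact Nat.dvd_gcd h2k <| Nat.modEq_zero_iff_dvd.1 <|
    hmod.symm.trans (Nat.modEq_zero_iff_dvd.2 (Nat.gcd_dvd_left _ _))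

lemma two_pow_mul_le_two_pow_mul_ck {k : ℕ} (hk : 1 ≤ k) (n : ℕ) :
    2 ^ (n * k) ≤ 2 ^ n * ck k n := by
  have : 2 ^ ((k - 1) * n) ≤ ck k n :=
    single_le_sum (f := fun i => 2 ^ (i * n)) (fun _ _ => Nat.zero_le _) (mem_range.2 (by omega))
  calc 2 ^ (n * k) = 2 ^ n * 2 ^ ((k - 1) * n) := by
        obtain ⟨k, rfl⟩ := Nat.exists_eq_add_of_le' hk
        rw [← pow_add]; congr 1; simp; ring
    _ ≤ 2 ^ n * ck k n := Nat.mul_le_mul_left _ this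

lemma ck_add_mul_two_pow_le {k j : ℕ} (hj : j ≤ k) (n : ℕ) :
    ck k (n + j) * 2 ^ n ≤ k * 2 ^ (k * k) * 2 ^ (n * k) := by
  calc ck k (n + j) * 2 ^ n = ∑ i ∈ range k, 2 ^ (i * (n + j) + n) := by
        simp only [ck, sum_mul, pow_add]
    _ ≤ ∑ _i ∈ range k, 2 ^ (k * k + n * k) := sum_le_sum fun i hi => by
        have := mem_range.1 hi
        exact Nat.pow_le_pow_right two_pos (by nlinarith)
    _ = k * 2 ^ (k * k) * 2 ^ (n * k) := by simp [pow_add, mul_assoc]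

lemma two_pow_le_two_pow_mul_sum_ck {k : ℕ} (hk : 1 ≤ k) (n : ℕ) :
    2 ^ (n * k) ≤ 2 ^ n * ∑ j : Fin k, ck k (n + j) :=
  (two_pow_mul_le_two_pow_mul_ck hk n).trans <| Nat.mul_le_mul_left _ <|
    single_le_sum (f := fun j : Fin k => ck k (n + j)) (fun _ _ => Nat.zero_le _)
      (mem_univ (⟨0, hk⟩ : Fin k))

lemma two_pow_mul_sum_ck_le (k n : ℕ) :
    2 ^ n * ∑ j : Fin k, ck k (n + j) ≤ k * (k * 2 ^ (k * k)) * 2 ^ (n * k) :=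
  calc 2 ^ n * ∑ j : Fin k, ck k (n + j) = ∑ j : Fin k, ck k (n + j) * 2 ^ n := by
        rw [mul_sum]; exact sum_congr rfl fun _ _ => mul_comm _ _
    _ ≤ ∑ _j : Fin k, k * 2 ^ (k * k) * 2 ^ (n * k) :=
        sum_le_sum fun j _ => ck_add_mul_two_pow_le j.isLt.le n
    _ = k * (k * 2 ^ (k * k)) * 2 ^ (n * k) := by simp [mul_assoc]

def ckVec (k n : ℕ) : Fin k → ℤ := fun j => ck k (n + j)

def powTwoVandermonde (k : ℕ) : Matrix (Fin k) (Fin k) ℤ :=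
  vandermonde fun i => 2 ^ (i : ℕ)

lemma det_powTwoVandermonde_pos (k : ℕ) : 0 < (powTwoVandermonde k).det := by
  rw [powTwoVandermonde, det_vandermonde]
  refine prod_pos fun i _ => prod_pos fun j hj => sub_pos.2 ?_
  exact pow_lt_pow_right₀ one_lt_two (Fin.lt_def.1 (Finset.mem_Ioi.1 hj))

lemma ckVec_eq_vecMul (k n : ℕ) :
    ckVec k n = (fun i : Fin k => ((2 : ℤ) ^ n) ^ (i : ℕ)) ᵥ* powTwoVandermonde k := by
  ext j
  simp only [ckVec, ck, vecMul, dotProduct, powTwoVandermonde, vandermonde_apply, ← pow_mul,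
    ← pow_add]
  push_cast
  rw [← Fin.sum_univ_eq_sum_range]
  exact sum_congr rfl fun i _ => by ring_nf

lemma Matrix.vecMul_dotProduct_adjugate_mulVec {ι R : Type*} [Fintype ι] [DecidableEq ι]
    [CommRing R] (A : Matrix ι ι R) (u z : ι → R) :
    u ᵥ* A ⬝ᵥ A.adjugate *ᵥ z = A.det * (u ⬝ᵥ z) := by
  rw [← dotProduct_mulVec, mulVec_mulVec, mul_adjugate, smul_mulVec, one_mulVec, dotProduct_smul,
    smul_eq_mul]

lemma Matrix.abs_mulVec_le {ι κ : Type*} [Fintype κ] (A : Matrix ι κ ℤ) {z : κ → ℤ} {Z : ℤ}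
    (hz : ∀ j, |z j| ≤ Z) (i : ι) : |(A *ᵥ z) i| ≤ (∑ j, |A i j|) * Z :=
  calc |(A *ᵥ z) i| = |∑ j, A i j * z j| := rfl
    _ ≤ ∑ j, |A i j| * |z j| := by
        simpa only [abs_mul] using abs_sum_le_sum_abs (fun j => A i j * z j) univ
    _ ≤ ∑ j, |A i j| * Z :=
        sum_le_sum fun j _ => mul_le_mul_of_nonneg_left (hz j) (abs_nonneg _)
    _ = (∑ j, |A i j|) * Z := (Finset.sum_mul _ _ _).symm

lemma sum_range_digits_add {M : ℤ} (hM : 0 ≤ M) (Q : ℤ) (k : ℕ) :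
    ∑ i ∈ range k, M ^ i * (Q / M ^ i % M) + M ^ k * (Q / M ^ k) = Q := by
  induction k with
  | zero => simp
  | succ k ih =>
    rw [sum_range_succ, pow_succ, ← Int.ediv_ediv_of_nonneg (pow_nonneg hM k)]
    linear_combination ih + M ^ k * Int.emod_add_mul_ediv (Q / M ^ k) M

lemma exists_digits {M : ℤ} (hM : 0 < M) {k K : ℕ} {Q : ℤ} (hQ : |Q| ≤ K * M ^ (k + 1)) :
    ∃ z : Fin (k + 1) → ℤ, (fun i : Fin (k + 1) => M ^ (i : ℕ)) ⬝ᵥ z = Q ∧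
      ∀ i, |z i| ≤ (K + 1) * M := by
  refine ⟨Fin.snoc (fun i : Fin k => Q / M ^ (i : ℕ) % M) (Q / M ^ k), ?_, fun i => ?_⟩
  · simpa [dotProduct, Fin.sum_univ_castSucc,
      Fin.sum_univ_eq_sum_range (fun i => M ^ i * (Q / M ^ i % M))]
      using sum_range_digits_add hM.le Q k
  have hMk := pow_pos hM k
  induction i using Fin.lastCases with
  | last =>
    rw [Fin.snoc_last]
    refine le_of_mul_le_mul_left ?_ hMk
    calc M ^ k * |Q / M ^ k| = |Q - Q % M ^ k| := by
          rw [← abs_of_pos hMk, ← abs_mul, abs_of_pos hMk]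
          congr 1
          linarith [Int.emod_add_mul_ediv Q (M ^ k)]
      _ ≤ |Q| + |Q % M ^ k| := abs_sub _ _
      _ ≤ |Q| + M ^ k := by
          rw [abs_of_nonneg (Int.emod_nonneg Q hMk.ne')]
          linarith [Int.emod_lt_of_pos Q hMk]
      _ ≤ M ^ k * ((K + 1) * M) := by
          rw [pow_succ] at hQ
          nlinarith
  | cast j =>
    rw [Fin.snoc_castSucc, abs_of_nonneg (Int.emod_nonneg _ hM.ne')]
    nlinarith [Int.emod_lt_of_pos (Q / M ^ (j : ℕ)) hM]

lemma exists_dotProduct_ckVec_eq_mul {k : ℕ} (hk : 1 ≤ k) :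
    ∃ d : ℕ, 0 < d ∧ ∀ K : ℕ, ∃ c : ℕ, ∀ n (Q : ℤ), |Q| ≤ K * 2 ^ (n * k) →
      ∃ w : Fin k → ℤ, w ⬝ᵥ ckVec k n = d * Q ∧ ∀ j, |w j| ≤ c * 2 ^ n := by
  obtain ⟨k, rfl⟩ := Nat.exists_eq_add_of_le' hk
  set V := powTwoVandermonde (k + 1)
  have hV : 0 < V.det := det_powTwoVandermonde_pos (k + 1)
  refine ⟨V.det.toNat, by omega, fun K => ?_⟩
  obtain ⟨B, hB⟩ := Finite.exists_le fun i => ∑ j, |V.adjugate i j|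
  refine ⟨B.toNat * (K + 1), fun n Q hQ => ?_⟩
  obtain ⟨z, hz, hzle⟩ := exists_digits (M := 2 ^ n) (by positivity) (K := K) (Q := Q)
    (by simpa only [← pow_mul, mul_comm] using hQ)
  refine ⟨V.adjugate *ᵥ z, ?_, fun j => ?_⟩
  · rw [dotProduct_comm, ckVec_eq_vecMul, vecMul_dotProduct_adjugate_mulVec, hz,
      Int.toNat_of_nonneg hV.le]
  · calc |(V.adjugate *ᵥ z) j| ≤ (∑ l, |V.adjugate j l|) * ((K + 1) * 2 ^ n) :=
          abs_mulVec_le _ hzle j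
      _ ≤ B.toNat * ((K + 1) * 2 ^ n) :=
          mul_le_mul_of_nonneg_right ((hB j).trans (Int.self_le_toNat B)) (by positivity)
      _ = ((B.toNat * (K + 1) : ℕ) : ℤ) * 2 ^ n := by push_cast; ring

lemma abs_single_apply_le {ι : Type*} [DecidableEq ι] (i : ι) (v : ℤ) (j : ι) :
    |(Pi.single i v : ι → ℤ) j| ≤ |v| := by
  rw [Pi.single_apply]
  split_ifs <;> simp

lemma exists_dvd_sub_of_gcd_dvd {a b R D : ℤ} (hD : 0 < D) (h : (Int.gcd a b : ℤ) ∣ R) :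
    ∃ x y, 0 ≤ x ∧ x < D ∧ 0 ≤ y ∧ y < D ∧ D ∣ R - (x * a + y * b) := by
  obtain ⟨t, rfl⟩ := h
  set u := a.gcdA b * t
  set v := a.gcdB b * t
  refine ⟨u % D, v % D, Int.emod_nonneg _ hD.ne', Int.emod_lt_of_pos _ hD,
    Int.emod_nonneg _ hD.ne', Int.emod_lt_of_pos _ hD, ⟨a * (u / D) + b * (v / D), ?_⟩⟩
  rw [Int.gcd_eq_gcd_ab]
  linear_combination -a * Int.emod_add_mul_ediv u D - b * Int.emod_add_mul_ediv v D

lemma exists_dotProduct_ckVec_eq {k : ℕ} (hk : 2 ≤ k) (K : ℕ) :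
    ∃ c : ℕ, ∀ n, k ∣ n → ∀ R : ℤ, ((Nat.gcd (2 ^ k - 1) k : ℕ) : ℤ) ∣ R →
      |R| ≤ K * 2 ^ (n * k) → ∃ δ : Fin k → ℤ, δ ⬝ᵥ ckVec k n = R ∧ ∀ j, |δ j| ≤ c * 2 ^ n := by
  obtain ⟨d, hd, hmul⟩ := exists_dotProduct_ckVec_eq_mul (by omega : 1 ≤ k)
  obtain ⟨c, hc⟩ := hmul (K + 2 * d * (k * 2 ^ (k * k)))
  refine ⟨c + 2 * d, fun n hkn R hR hRK => ?_⟩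
  have hck : ∀ j ≤ 1, (ck k (n + j) : ℤ) ≤ k * 2 ^ (k * k) * 2 ^ (n * k) := fun j hj => by
    exact_mod_cast (Nat.le_mul_of_pos_right _ (by positivity)).trans
      (ck_add_mul_two_pow_le (show j ≤ k by omega) n)
  let i₀ : Fin k := ⟨0, by omega⟩
  let i₁ : Fin k := ⟨1, by omega⟩
  obtain ⟨x, y, hx₀, hxd, hy₀, hyd, Q, hQ⟩ := exists_dvd_sub_of_gcd_dvd (a := ck k n)
    (b := ck k (n + 1)) (R := R) (D := d) (by exact_mod_cast hd)
    (by
      rw [Int.gcd_natCast_natCast]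
      exact (Int.natCast_dvd_natCast.2 (gcd_ck_ck_succ_dvd hkn)).trans hR)
  have hQK : |Q| ≤ ((K + 2 * d * (k * 2 ^ (k * k)) : ℕ) : ℤ) * 2 ^ (n * k) := by
    have ha := hck 0 zero_le_one
    have hb := hck 1 le_rfl
    rw [add_zero] at ha
    have hR' := abs_le.1 hRK
    calc |Q| ≤ d * |Q| := le_mul_of_one_le_left (abs_nonneg _) (by exact_mod_cast hd)
      _ = |R - (x * ck k n + y * ck k (n + 1))| := by rw [hQ, abs_mul, Nat.abs_cast]
      _ ≤ _ := by
        rw [abs_le]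
        push_cast
        constructor <;>
          nlinarith [Nat.cast_nonneg (α := ℤ) (ck k n), Nat.cast_nonneg (α := ℤ) (ck k (n + 1))]
  obtain ⟨w, hw, hwc⟩ := hc n Q hQK
  refine ⟨Pi.single i₀ x + Pi.single i₁ y + w, ?_, fun j => ?_⟩
  · simp only [add_dotProduct, single_dotProduct, hw, ckVec, i₀, i₁]
    linear_combination -hQ
  · have h₀ := abs_single_apply_le i₀ x j
    have h₁ := abs_single_apply_le i₁ y j
    rw [abs_of_nonneg hx₀] at h₀
    rw [abs_of_nonneg hy₀] at h₁
    have h₂ :=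
      abs_add_three ((Pi.single i₀ x : Fin k → ℤ) j) ((Pi.single i₁ y : Fin k → ℤ) j) (w j)
    rw [Pi.add_apply, Pi.add_apply]
    push_cast
    nlinarith [one_le_pow₀ (one_le_two (α := ℤ)) (n := n), hwc j]

lemma exists_coeffs_of_abs_le {k n a c : ℕ} {δ : Fin k → ℤ} (ha : 2 ^ k + c ≤ a)
    (hδ : ∀ j, |δ j| ≤ c * 2 ^ n) :
    ∃ A : Fin k → ℕ, (∀ j : Fin k, 2 ^ (n + j) ≤ A j ∧ A j ≤ (a + c) * 2 ^ n) ∧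
      ((∑ j, A j * ck k (n + j) : ℕ) : ℤ) =
        a * 2 ^ n * ∑ j : Fin k, (ck k (n + j) : ℤ) + δ ⬝ᵥ ckVec k n := by
  have hlow : ∀ j : Fin k, (2 ^ (n + j) : ℤ) ≤ a * 2 ^ n + δ j := fun j => by
    have h2 : (2 ^ (n + j) : ℤ) ≤ 2 ^ k * 2 ^ n := by
      rw [mul_comm, ← pow_add]
      exact pow_le_pow_right₀ one_le_two (by omega)
    have ha' : ((2 ^ k + c : ℕ) : ℤ) ≤ a := by exact_mod_cast ha
    push_cast at ha'
    nlinarith [(abs_le.1 (hδ j)).1, pow_pos (two_pos (α := ℤ)) n]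
  have hnonneg : ∀ j, 0 ≤ (a * 2 ^ n + δ j : ℤ) := fun j =>
    (by positivity : (0 : ℤ) ≤ 2 ^ _).trans (hlow j)
  refine ⟨fun j => (a * 2 ^ n + δ j).toNat, fun j => ⟨?_, ?_⟩, ?_⟩
  · exact (Int.le_toNat (hnonneg j)).2 (by exact_mod_cast hlow j)
  · refine Int.toNat_le.2 ?_
    push_cast
    linarith [(abs_le.1 (hδ j)).2]
  · push_cast
    simp only [Int.toNat_of_nonneg (hnonneg _), add_mul, sum_add_distrib, mul_sum, dotProduct,
      ckVec]

lemma exists_coeffs_of_window {k : ℕ} (hk : 2 ≤ k) :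
    ∃ β T : ℕ, 0 < β ∧ 0 < T ∧ ∀ n, k ∣ n → ∀ N, β * 2 ^ (n * k) ≤ N →
      N < β * 2 ^ (k * k) * 2 ^ (n * k) → Nat.gcd (2 ^ k - 1) k ∣ N →
      ∃ A : Fin k → ℕ, (∀ j : Fin k, 2 ^ (n + j) ≤ A j ∧ A j ≤ T * 2 ^ n) ∧
        ∑ j, A j * ck k (n + j) = N := by
  set E := Nat.gcd (2 ^ k - 1) k
  have hE : 0 < E := Nat.gcd_pos_of_pos_right _ (by omega)
  set K := E * (k * (k * 2 ^ (k * k)))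
  obtain ⟨c, hc⟩ := exists_dotProduct_ckVec_eq hk K
  set β := (2 ^ k + c) * K
  refine ⟨β, β * 2 ^ (k * k) * E + c, by positivity, by positivity,
    fun n hkn N hlow hhigh hEN => ?_⟩
  set G := E * (2 ^ n * ∑ j : Fin k, ck k (n + j)) with hGdef
  have hG_le : G ≤ K * 2 ^ (n * k) := by
    rw [mul_assoc E]
    exact Nat.mul_le_mul_left E (two_pow_mul_sum_ck_le k n)
  have hG_ge : 2 ^ (n * k) ≤ G :=
    (two_pow_le_two_pow_mul_sum_ck (by omega) n).trans (Nat.le_mul_of_pos_left _ hE)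
  have hG : 0 < G := lt_of_lt_of_le (by positivity) hG_ge
  obtain ⟨δ, hδ, hδc⟩ := hc n hkn ((N % G : ℕ) : ℤ)
    (Int.natCast_dvd_natCast.2 ((Nat.dvd_mod_iff (dvd_mul_right _ _)).2 hEN))
    (by rw [Nat.abs_cast]; exact_mod_cast (Nat.mod_lt N hG).le.trans hG_le)
  set C := N / G
  have hC : 2 ^ k + c ≤ C := (Nat.le_div_iff_mul_le hG).2 <|
    (Nat.mul_le_mul_left _ hG_le).trans (by rw [← mul_assoc]; exact hlow)
  have hC' : C < β * 2 ^ (k * k) := (Nat.div_lt_iff_lt_mul hG).2 <|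
    hhigh.trans_le (Nat.mul_le_mul_left _ hG_ge)
  obtain ⟨A, hA, hsum⟩ := exists_coeffs_of_abs_le (hC.trans (Nat.le_mul_of_pos_right _ hE)) hδc
  refine ⟨A, fun j => ⟨(hA j).1, (hA j).2.trans (Nat.mul_le_mul_right _ ?_)⟩, ?_⟩
  · exact Nat.add_le_add_right (Nat.mul_le_mul_right E hC'.le) c
  · have hdec : ((G * C + N % G : ℕ) : ℤ) = N := congrArg _ (Nat.div_add_mod N G)
    refine Nat.cast_injective (R := ℤ) ?_
    rw [hsum, hδ, ← hdec, hGdef]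
    push_cast
    ring

lemma exists_pow_window {b β N : ℕ} (hb : 1 < b) (hβ : 0 < β) (hN : β ≤ N) :
    ∃ m, β * b ^ m ≤ N ∧ N < β * b ^ (m + 1) := by
  have hq : N / β ≠ 0 := (Nat.div_pos hN hβ).ne'
  refine ⟨Nat.log b (N / β), ?_, ?_⟩
  · exact (Nat.mul_le_mul_left β (Nat.pow_log_le_self b hq)).trans (Nat.mul_div_le N β)
  · exact (Nat.lt_mul_div_succ N hβ).trans_le
      (Nat.mul_le_mul_left β (Nat.lt_pow_succ_log_self hb _))

lemma exists_coeffs {k : ℕ} (hk : 2 ≤ k) :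
    ∃ T N₀ : ℕ, 0 < T ∧ ∀ N, N₀ ≤ N → Nat.gcd (2 ^ k - 1) k ∣ N →
      ∃ n : ℕ, 1 ≤ n ∧ ∃ A : Fin k → ℕ, (∀ j : Fin k, 2 ^ (n + j) ≤ A j ∧ A j ≤ T * 2 ^ n) ∧
        ∑ j, A j * ck k (n + j) = N := by
  obtain ⟨β, T, hβ, hT, hwindow⟩ := exists_coeffs_of_window hk
  refine ⟨T, β * 2 ^ (k * k), hT, fun N hN hE => ?_⟩
  obtain ⟨m, hm, hm'⟩ := exists_pow_window (b := 2 ^ (k * k))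
    (Nat.one_lt_two_pow (by positivity)) (by positivity) hN
  have hpow : 2 ^ (k * (m + 1) * k) = 2 ^ (k * k) * (2 ^ (k * k)) ^ m := by
    rw [← pow_mul, ← pow_add]; ring_nf
  refine ⟨k * (m + 1), by nlinarith, hwindow _ (dvd_mul_right k _) N ?_ ?_ hE⟩
  · convert hm using 1
    rw [hpow]; ring
  · convert hm' using 1
    rw [hpow]; ring

def IsSumOfBinaryKthPowers (k W N : ℕ) : Prop :=
  ∃ l : Multiset ℕ, l.card ≤ W ∧ (∀ x ∈ l, IsBinaryKthPower k x) ∧ l.sum = N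

lemma IsSumOfBinaryKthPowers.add {k W₁ W₂ N₁ N₂ : ℕ} (h₁ : IsSumOfBinaryKthPowers k W₁ N₁)
    (h₂ : IsSumOfBinaryKthPowers k W₂ N₂) : IsSumOfBinaryKthPowers k (W₁ + W₂) (N₁ + N₂) := by
  obtain ⟨l₁, hc₁, hm₁, rfl⟩ := h₁
  obtain ⟨l₂, hc₂, hm₂, rfl⟩ := h₂
  refine ⟨l₁ + l₂, by simpa using add_le_add hc₁ hc₂, fun x hx => ?_, Multiset.sum_add _ _⟩
  exact (Multiset.mem_add.1 hx).elim (hm₁ x) (hm₂ x)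

lemma IsSumOfBinaryKthPowers.sum {ι : Type*} {k : ℕ} (s : Finset ι) {W N : ι → ℕ}
    (h : ∀ i ∈ s, IsSumOfBinaryKthPowers k (W i) (N i)) :
    IsSumOfBinaryKthPowers k (∑ i ∈ s, W i) (∑ i ∈ s, N i) := by
  classical
  induction s using Finset.induction_on with
  | empty => exact ⟨0, by simp, by simp, by simp⟩
  | insert i s hi ih =>
    rw [sum_insert hi, sum_insert hi]
    exact (h i (mem_insert_self i s)).add (ih fun j hj => h j (mem_insert_of_mem hj))

lemma isSumOfBinaryKthPowers_mul_ck {k s a T : ℕ} (hs : 1 ≤ s) (ha : 2 ^ s ≤ a)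
    (haT : a ≤ T * 2 ^ s) : IsSumOfBinaryKthPowers k (2 * T) (a * ck k s) := by
  set h := 2 ^ (s - 1)
  have hh : 2 ^ s = 2 * h := by rw [← pow_succ']; congr 1; omega
  have hq : 2 ≤ a / h := (Nat.le_div_iff_mul_le (by positivity)).2 (by omega)
  have hr := Nat.mod_lt a (show 0 < h by positivity)
  refine ⟨Multiset.replicate (a / h - 1) (h * ck k s) + {(h + a % h) * ck k s}, ?_, ?_, ?_⟩
  · simp only [Multiset.card_add, Multiset.card_replicate, Multiset.card_singleton]
    have : a / h ≤ 2 * T := Nat.div_le_of_le_mul (by rw [hh] at haT; linarith)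
    omega
  · intro x hx
    rcases Multiset.mem_add.1 hx with hx | hx
    · exact ⟨s, h, hs, le_rfl, by omega, Multiset.eq_of_mem_replicate hx⟩
    · exact ⟨s, h + a % h, hs, by omega, by omega, Multiset.mem_singleton.1 hx⟩
  · obtain ⟨q, hq'⟩ : ∃ q, a / h = q + 1 := ⟨a / h - 1, by omega⟩
    have key : q * h + (h + a % h) = a := by
      have := Nat.div_add_mod a h
      rw [hq'] at this
      linarith
    simp only [Multiset.sum_add, Multiset.sum_replicate, Multiset.sum_singleton, smul_eq_mul, hq',
      Nat.add_sub_cancel]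
    rw [← mul_assoc, ← add_mul, key]

lemma isBinaryKthPower_one {N : ℕ} (hN : 0 < N) : IsBinaryKthPower 1 N :=
  ⟨Nat.log 2 N + 1, N, by omega, by simpa using Nat.pow_log_le_self 2 hN.ne',
    Nat.lt_pow_succ_log_self one_lt_two N, by simp [ck]⟩

/-- Waring's theorem for binary `k`'th powers: there exist a positive integer `W` and a
threshold `N₀` such that every `N ≥ N₀` that is a multiple of `E_k = gcd(2^k - 1, k)` is the
sum of at most `W` binary `k`'th powers. -/
theorem waring_binary_kth_powers (k : ℕ) (hk : 1 ≤ k) :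
    ∃ W N₀ : ℕ, 0 < W ∧ ∀ N : ℕ, N₀ ≤ N → Nat.gcd (2 ^ k - 1) k ∣ N →
      ∃ l : Multiset ℕ, l.card ≤ W ∧ (∀ x ∈ l, IsBinaryKthPower k x) ∧ l.sum = N := by
  obtain rfl | hk := hk.eq_or_lt
  · exact ⟨1, 1, one_pos, fun N hN _ =>
      ⟨{N}, by simp, by simpa using isBinaryKthPower_one hN, Multiset.sum_singleton N⟩⟩
  obtain ⟨T, N₀, hT, hcoeffs⟩ := exists_coeffs hk
  refine ⟨k * (2 * T), N₀, by positivity, fun N hN hE => ?_⟩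
  obtain ⟨n, hn, A, hA, rfl⟩ := hcoeffs N hN hE
  have hsplit : ∀ j : Fin k, IsSumOfBinaryKthPowers k (2 * T) (A j * ck k (n + j)) := fun j =>
    isSumOfBinaryKthPowers_mul_ck (by omega) (hA j).1
      ((hA j).2.trans (Nat.mul_le_mul_left T (Nat.pow_le_pow_right two_pos (by omega))))
  have := IsSumOfBinaryKthPowers.sum univ fun j _ => hsplit j
  rwa [sum_const, card_univ, Fintype.card_fin, smul_eq_mul] at this
end

section
/- Let k ≥ 1 and n ≥ 1 be integers and let a be an integer with a ≥ 2^{n−1}. Then a·c_k(n) can be written as the sum of at most ⌈a/(2^n − 1)⌉ binary k'th powers. -/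
/-!
Since `a * ck k n = ∑ xᵢ * ck k n` whenever `a = ∑ xᵢ`, it suffices to write `a` as a sum of
at most `⌈a / (2^n - 1)⌉` integers in `[2^(n-1), 2^n - 1]`: greedily peel off parts `2^n - 1`,
and once the remainder would drop below `2^(n-1)`, split what is left into two parts instead.
-/

/-- `2 * L ≤ U + 1` guarantees that `U < a < U + L` splits as `L + (a - L)` with both parts
in `[L, U]`. -/
theorem exists_multiset_sum_eq_of_mem_Icc {L U : ℕ} (hL : 1 ≤ L) (hLU : 2 * L ≤ U + 1)
    (a : ℕ) (ha : L ≤ a) : ∃ l : Multiset ℕ, l.card ≤ (a + U - 1) / U ∧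
      (∀ x ∈ l, L ≤ x ∧ x ≤ U) ∧ l.sum = a := by
  have hU : 0 < U := by omega
  induction a using Nat.strong_induction_on with
  | _ a ih =>
    by_cases ha_le : a ≤ U
    · refine ⟨{a}, ?_, by simpa using ⟨ha, ha_le⟩, Multiset.sum_singleton a⟩
      simpa [Nat.le_div_iff_mul_le hU] using (by omega : U ≤ a + U - 1)
    by_cases hrest : L ≤ a - U
    · obtain ⟨l, hcard, hmem, hsum⟩ := ih (a - U) (by omega) hrest
      refine ⟨U ::ₘ l, ?_, ?_, by rw [Multiset.sum_cons, hsum]; omega⟩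
      · have : a + U - 1 = (a - U + U - 1) + U := by omega
        rw [Multiset.card_cons, this, Nat.add_div_right _ hU]
        omega
      · rintro x hx
        rcases Multiset.mem_cons.mp hx with rfl | hx
        · omega
        · exact hmem x hx
    · refine ⟨{L, a - L}, ?_, ?_, ?_⟩
      · simpa [Nat.le_div_iff_mul_le hU] using (by omega : 2 * U ≤ a + U - 1)
      · simp only [Multiset.insert_eq_cons, Multiset.mem_cons, Multiset.mem_singleton]
        rintro x (rfl | rfl) <;> omega
      · simp only [Multiset.insert_eq_cons, Multiset.sum_cons, Multiset.sum_singleton]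
        omega

theorem mul_ck_sum_of_binary_kth_powers_general (k n a : ℕ) (hn : 1 ≤ n)
    (ha : 2 ^ (n - 1) ≤ a) :
    ∃ l : Multiset ℕ, l.card ≤ (a + (2 ^ n - 1) - 1) / (2 ^ n - 1) ∧
      (∀ x ∈ l, IsBinaryKthPower k x) ∧ l.sum = a * ck k n := by
  have hpow : 2 ^ n = 2 * 2 ^ (n - 1) := by rw [← pow_succ', Nat.sub_add_cancel hn]
  have hpos : 1 ≤ 2 ^ (n - 1) := Nat.one_le_two_pow
  obtain ⟨l, hcard, hmem, hsum⟩ :=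
    exists_multiset_sum_eq_of_mem_Icc (U := 2 ^ n - 1) hpos (by omega) a ha
  refine ⟨l.map (· * ck k n), by simpa using hcard, ?_, ?_⟩
  · simp only [Multiset.mem_map]
    rintro _ ⟨x, hx, rfl⟩
    obtain ⟨hlo, hhi⟩ := hmem x hx
    exact ⟨n, x, hn, hlo, by omega, rfl⟩
  · rw [Multiset.sum_map_mul_right, Multiset.map_id', hsum]

/-- If `a ≥ 2^(n-1)` then `a * c_k(n)` is the sum of at most `⌈a / (2^n - 1)⌉` binary
`k`'th powers. (Here `(a + (2^n - 1) - 1) / (2^n - 1)` is the ceiling of `a/(2^n - 1)`.) -/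
theorem mul_ck_sum_of_binary_kth_powers (k n a : ℕ) (hk : 1 ≤ k) (hn : 1 ≤ n)
    (ha : 2 ^ (n - 1) ≤ a) :
    ∃ l : Multiset ℕ, l.card ≤ (a + (2 ^ n - 1) - 1) / (2 ^ n - 1) ∧
      (∀ x ∈ l, IsBinaryKthPower k x) ∧ l.sum = a * ck k n :=
  mul_ck_sum_of_binary_kth_powers_general k n a hn ha
end

section
/- For every integer k ≥ 1, every entry of the inverse of the k×k Vandermonde matrix M_k = V(1, 2, 4, …, 2^{k−1}) (whose (i,j) entry is (2^i)^j for 0 ≤ i, j < k), computed over the rationals, has absolute value less than 34. -/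
open Polynomial Finset

/-- coefficient bound for products of linear factors -/
private lemma abs_coeff_prod_le {ι : Type*} [DecidableEq ι] (s : Finset ι) (a b : ι → ℚ) :
    ∀ n, |(∏ j ∈ s, (C (a j) * (X - C (b j)))).coeff n| ≤ ∏ j ∈ s, |a j| * (1 + |b j|) := by
  classical
  induction s using Finset.induction_on with
  | empty =>
    intro n
    simp only [prod_empty, coeff_one]
    split <;> simp
  | @insert x s hx ih =>
    intro n
    rw [prod_insert hx, prod_insert hx]
    set q : ℚ[X] := ∏ j ∈ s, (C (a j) * (X - C (b j))) with hq
    set B : ℚ := ∏ j ∈ s, |a j| * (1 + |b j|) with hB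
    have hrw : C (a x) * (X - C (b x)) * q = C (a x) * (X * q) - C (a x * b x) * q := by
      simp only [C_mul]; ring
    rw [hrw, coeff_sub, coeff_C_mul, coeff_C_mul]
    have hax := abs_nonneg (a x)
    have hbx := abs_nonneg (b x)
    cases n with
    | zero =>
      have h0 : (X * q).coeff 0 = 0 := by
        rw [Polynomial.mul_coeff_zero, coeff_X_zero, zero_mul]
      rw [h0, mul_zero, zero_sub, abs_neg, abs_mul, abs_mul]
      have hB0 : 0 ≤ B := prod_nonneg fun j _ => by positivity
      nlinarith [mul_le_mul_of_nonneg_left (ih 0) (mul_nonneg hax hbx), mul_nonneg hax hB0]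
    | succ m =>
      rw [coeff_X_mul]
      calc |a x * q.coeff m - a x * b x * q.coeff (m + 1)|
          ≤ |a x * q.coeff m| + |a x * b x * q.coeff (m + 1)| := abs_sub _ _
        _ = |a x| * |q.coeff m| + |a x| * |b x| * |q.coeff (m + 1)| := by
            rw [abs_mul, abs_mul, abs_mul]
        _ ≤ |a x| * (1 + |b x|) * B := by
            nlinarith [mul_le_mul_of_nonneg_left (ih m) hax,
              mul_le_mul_of_nonneg_left (ih (m + 1)) (mul_nonneg hax hbx)]

/-- product over m < j is at most 2 -/
private lemma lem_low (j : ℕ) :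
    ∏ m ∈ range j, ((1 + (2:ℚ) ^ m) / ((2:ℚ) ^ j - 2 ^ m)) ≤ 2 := by
  cases j with
  | zero => norm_num
  | succ n =>
    rw [prod_range_succ]
    have hmain : ∏ m ∈ range n, ((1 + (2:ℚ) ^ m) / ((2:ℚ) ^ (n + 1) - 2 ^ m)) ≤ 1 := by
      apply Finset.prod_le_one
      · intro m hm
        simp only [mem_range] at hm
        have h1 : (2:ℚ) ^ m ≤ 2 ^ (n + 1) := pow_le_pow_right₀ (by norm_num) (by omega)
        have h2 : (0:ℚ) < 2 ^ m := by positivity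
        have h3 : (2:ℚ) ^ m < 2 ^ (n + 1) := by
          have : (2:ℚ) ^ (m + 1) ≤ 2 ^ (n + 1) := pow_le_pow_right₀ (by norm_num) (by omega)
          rw [pow_succ] at this; nlinarith
        exact div_nonneg (by positivity) (by linarith)
      · intro m hm
        simp only [mem_range] at hm
        have h1 : (2:ℚ) ^ (m + 1) ≤ 2 ^ n := pow_le_pow_right₀ (by norm_num) (by omega)
        have h2 : (0:ℚ) < 2 ^ m := by positivity
        have h3 : (2:ℚ) ^ (m + 1) = 2 ^ m * 2 := pow_succ 2 m
        have h4 : (2:ℚ) ^ (n + 1) = 2 ^ n * 2 := pow_succ 2 n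
        have h5 : (1:ℚ) ≤ 2 ^ n := one_le_pow₀ (by norm_num)
        rw [h3] at h1
        rw [div_le_one (by rw [h4]; linarith), h4]
        linarith
    have h1 : (1:ℚ) ≤ 2 ^ n := one_le_pow₀ (by norm_num)
    have h4 : (2:ℚ) ^ (n + 1) = 2 ^ n * 2 := pow_succ 2 n
    have hlast : (1 + (2:ℚ) ^ n) / ((2:ℚ) ^ (n + 1) - 2 ^ n) ≤ 2 := by
      rw [h4, show (2:ℚ) ^ n * 2 - 2 ^ n = 2 ^ n by ring, div_le_iff₀ (by positivity)]
      linarith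
    have hlast0 : (0:ℚ) ≤ (1 + (2:ℚ) ^ n) / ((2:ℚ) ^ (n + 1) - 2 ^ n) := by
      apply div_nonneg (by positivity); rw [h4]; linarith
    calc (∏ m ∈ range n, ((1 + (2:ℚ) ^ m) / ((2:ℚ) ^ (n + 1) - 2 ^ m)))
          * ((1 + (2:ℚ) ^ n) / ((2:ℚ) ^ (n + 1) - 2 ^ n))
        ≤ 1 * 2 := mul_le_mul hmain hlast hlast0 (by norm_num)
      _ = 2 := by norm_num

private lemma lem_tail_aux : ∀ D : ℕ,
    ∏ d ∈ range (D + 2), (((2:ℚ) ^ (d + 1) + 1) / ((2:ℚ) ^ (d + 1) - 1)) ≤ 10 - 5 / 2 ^ D := by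
  intro D
  induction D with
  | zero =>
    norm_num [prod_range_succ]
  | succ n ih =>
    rw [show n + 1 + 2 = (n + 2) + 1 from rfl, prod_range_succ]
    set x : ℚ := 2 ^ n with hxdef
    have hx : (1:ℚ) ≤ x := one_le_pow₀ (by norm_num)
    have hx0 : (0:ℚ) < x := by linarith
    have hp : (2:ℚ) ^ (n + 2 + 1) = 8 * x := by
      rw [show n + 2 + 1 = n + 3 from rfl, pow_add]; ring
    have hP0 : (0:ℚ) ≤ ∏ d ∈ range (n + 2), (((2:ℚ) ^ (d + 1) + 1) / ((2:ℚ) ^ (d + 1) - 1)) := by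
      apply prod_nonneg
      intro d _
      have : (2:ℚ) ≤ 2 ^ (d + 1) := by
        calc (2:ℚ) = 2 ^ 1 := (pow_one 2).symm
          _ ≤ 2 ^ (d + 1) := pow_le_pow_right₀ (by norm_num) (by omega)
      apply div_nonneg <;> linarith
    have ht0 : (0:ℚ) < 8 * x - 1 := by linarith
    have htf : (0:ℚ) ≤ ((2:ℚ) ^ (n + 2 + 1) + 1) / ((2:ℚ) ^ (n + 2 + 1) - 1) := by
      rw [hp]; apply div_nonneg <;> linarith
    calc (∏ d ∈ range (n + 2), (((2:ℚ) ^ (d + 1) + 1) / ((2:ℚ) ^ (d + 1) - 1)))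
          * (((2:ℚ) ^ (n + 2 + 1) + 1) / ((2:ℚ) ^ (n + 2 + 1) - 1))
        ≤ (10 - 5 / 2 ^ n) * (((2:ℚ) ^ (n + 2 + 1) + 1) / ((2:ℚ) ^ (n + 2 + 1) - 1)) :=
          mul_le_mul_of_nonneg_right ih htf
      _ ≤ 10 - 5 / 2 ^ (n + 1) := by
          rw [hp, show (2:ℚ) ^ (n + 1) = 2 * x by rw [pow_succ]; ring]
          have e1 : (10 - 5 / x) * ((8 * x + 1) / (8 * x - 1))
              = ((10 * x - 5) * (8 * x + 1)) / (x * (8 * x - 1)) := by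
            field_simp
            try ring
          have e2 : 10 - 5 / (2 * x) = (20 * x - 5) / (2 * x) := by
            field_simp
            try ring
          rw [← hxdef, e1, e2, div_le_div_iff₀ (by positivity) (by positivity)]
          nlinarith

private lemma lem_tail (D : ℕ) :
    ∏ d ∈ range D, (((2:ℚ) ^ (d + 1) + 1) / ((2:ℚ) ^ (d + 1) - 1)) ≤ 10 := by
  match D with
  | 0 => norm_num
  | 1 => rw [prod_range_succ, prod_range_zero]; norm_num
  | (n + 2) =>
    refine le_trans (lem_tail_aux n) ?_
    have : (0:ℚ) ≤ 5 / 2 ^ n := by positivity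
    linarith

private lemma factor_bound (j d : ℕ) (hd : 1 ≤ d) :
    (1 + (2:ℚ) ^ (j + d)) / ((2:ℚ) ^ (j + d) - 2 ^ j) ≤ ((2:ℚ) ^ d + 1) / ((2:ℚ) ^ d - 1) := by
  have hA : (1:ℚ) ≤ 2 ^ j := one_le_pow₀ (by norm_num)
  have hB : (2:ℚ) ≤ 2 ^ d := by
    calc (2:ℚ) = 2 ^ 1 := (pow_one 2).symm
      _ ≤ 2 ^ d := pow_le_pow_right₀ (by norm_num) hd
  have hm : (2:ℚ) ^ (j + d) = 2 ^ j * 2 ^ d := pow_add 2 j d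
  have hden1 : (0:ℚ) < 2 ^ (j + d) - 2 ^ j := by rw [hm]; nlinarith
  rw [div_le_div_iff₀ hden1 (by linarith)]
  nlinarith [mul_nonneg (by linarith : (0:ℚ) ≤ 2 ^ j - 1) (by linarith : (0:ℚ) ≤ 2 ^ d - 1)]

private lemma prod_G_le (j k : ℕ) (hjk : j < k) :
    ∏ m ∈ range k, (if m = j then 1 else (1 + (2:ℚ) ^ m) / |(2:ℚ) ^ j - 2 ^ m|) ≤ 20 := by
  set f : ℕ → ℚ := fun m => if m = j then 1 else (1 + (2:ℚ) ^ m) / |(2:ℚ) ^ j - 2 ^ m| with hf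
  have hf0 : ∀ m, 0 ≤ f m := by
    intro m
    simp only [hf]
    split
    · norm_num
    · positivity
  have hsplit : (∏ m ∈ Ico 0 (j + 1), f m) * (∏ m ∈ Ico (j + 1) k, f m)
      = ∏ m ∈ range k, f m := by
    rw [range_eq_Ico]
    exact prod_Ico_consecutive f (by omega) (by omega)
  have hA : ∏ m ∈ Ico 0 (j + 1), f m ≤ 2 := by
    rw [← range_eq_Ico, prod_range_succ]
    have hfj : f j = 1 := if_pos rfl
    rw [hfj, mul_one]
    have : ∏ m ∈ range j, f m
        = ∏ m ∈ range j, ((1 + (2:ℚ) ^ m) / ((2:ℚ) ^ j - 2 ^ m)) := by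
      apply prod_congr rfl
      intro m hm
      simp only [mem_range] at hm
      have hlt : (2:ℚ) ^ m < 2 ^ j := by
        have h1 : (2:ℚ) ^ (m + 1) ≤ 2 ^ j := pow_le_pow_right₀ (by norm_num) (by omega)
        have h2 : (0:ℚ) < 2 ^ m := by positivity
        rw [pow_succ] at h1; nlinarith
      simp only [hf]
      rw [if_neg (show ¬ m = j by omega), abs_of_pos (by linarith)]
    rw [this]
    exact lem_low j
  have hB : ∏ m ∈ Ico (j + 1) k, f m ≤ 10 := by
    have hstep : ∏ m ∈ Ico (j + 1) k, f m
        ≤ ∏ m ∈ Ico (j + 1) k, (((2:ℚ) ^ (m - j) + 1) / ((2:ℚ) ^ (m - j) - 1)) := by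
      apply prod_le_prod (fun m _ => hf0 m)
      intro m hm
      simp only [mem_Ico] at hm
      have hmj : j + (m - j) = m := by omega
      have hlt : (2:ℚ) ^ j < 2 ^ m := by
        have h1 : (2:ℚ) ^ (j + 1) ≤ 2 ^ m := pow_le_pow_right₀ (by norm_num) (by omega)
        have h2 : (0:ℚ) < 2 ^ j := by positivity
        rw [pow_succ] at h1; nlinarith
      have habs : |(2:ℚ) ^ j - 2 ^ m| = 2 ^ m - 2 ^ j := by
        rw [abs_of_neg (by linarith)]; ring
      have hfm : f m = (1 + (2:ℚ) ^ m) / (2 ^ m - 2 ^ j) := by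
        simp only [hf]
        rw [if_neg (show ¬ m = j by omega), habs]
      rw [hfm]
      have := factor_bound j (m - j) (by omega)
      rwa [hmj] at this
    have hre : ∏ m ∈ Ico (j + 1) k, (((2:ℚ) ^ (m - j) + 1) / ((2:ℚ) ^ (m - j) - 1))
        = ∏ d ∈ range (k - (j + 1)), (((2:ℚ) ^ (d + 1) + 1) / ((2:ℚ) ^ (d + 1) - 1)) := by
      rw [prod_Ico_eq_prod_range]
      apply prod_congr rfl
      intro d _
      have : j + 1 + d - j = d + 1 := by omega
      rw [this]
    exact le_trans hstep (le_trans (le_of_eq hre) (lem_tail _))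
  have hA0 : (0:ℚ) ≤ ∏ m ∈ Ico 0 (j + 1), f m := prod_nonneg fun m _ => hf0 m
  have hB0 : (0:ℚ) ≤ ∏ m ∈ Ico (j + 1) k, f m := prod_nonneg fun m _ => hf0 m
  calc ∏ m ∈ range k, f m
      = (∏ m ∈ Ico 0 (j + 1), f m) * (∏ m ∈ Ico (j + 1) k, f m) := hsplit.symm
    _ ≤ 2 * 10 := mul_le_mul hA hB hB0 (by norm_num)
    _ = 20 := by norm_num

/-- Every entry of the inverse (over `ℚ`) of the `k × k` Vandermonde matrix
`M_k = V(1, 2, 4, …, 2^(k-1))` has absolute value less than `34`. -/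
theorem vandermonde_inv_entries_lt (k : ℕ) (hk : 1 ≤ k) (i j : Fin k) :
    |(Matrix.vandermonde fun i : Fin k => (2 : ℚ) ^ (i : ℕ))⁻¹ i j| < 34 := by
  classical
  set v : Fin k → ℚ := fun m => (2:ℚ) ^ (m : ℕ) with hv
  have hvinj : Function.Injective v := by
    intro m₁ m₂ h
    have h' : ((2 ^ (m₁ : ℕ) : ℕ) : ℚ) = ((2 ^ (m₂ : ℕ) : ℕ) : ℚ) := by
      push_cast; exact h
    exact Fin.ext (Nat.pow_right_injective le_rfl (Nat.cast_injective h'))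
  have hvs : Set.InjOn v ↑(univ : Finset (Fin k)) := hvinj.injOn
  set W : Matrix (Fin k) (Fin k) ℚ :=
    Matrix.of fun m j' => (Lagrange.basis univ v j').coeff m with hWdef
  have hVW : Matrix.vandermonde v * W = 1 := by
    ext i' j'
    rw [Matrix.mul_apply, Matrix.one_apply]
    have hdeg : (Lagrange.basis univ v j').natDegree < k := by
      rw [Lagrange.natDegree_basis hvs (mem_univ j')]
      simp only [card_univ, Fintype.card_fin]
      omega
    have heval := eval_eq_sum_range' hdeg (v i')
    have hsum : ∑ m : Fin k, Matrix.vandermonde v i' m * W m j'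
        = ∑ m ∈ range k, (Lagrange.basis univ v j').coeff m * v i' ^ m := by
      rw [← Fin.sum_univ_eq_sum_range (fun m => (Lagrange.basis univ v j').coeff m * v i' ^ m) k]
      exact sum_congr rfl fun m _ => by
        simp [Matrix.vandermonde, hWdef, mul_comm]
    rw [hsum, ← heval]
    by_cases h : i' = j'
    · rw [if_pos h, h, Lagrange.eval_basis_self hvs (mem_univ j')]
    · rw [if_neg h, Lagrange.eval_basis_of_ne (fun hh => h hh.symm) (mem_univ i')]
  rw [Matrix.inv_eq_right_inv hVW]
  show |(Lagrange.basis univ v j).coeff i| < 34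
  have hb : |(Lagrange.basis univ v j).coeff i|
      ≤ ∏ m ∈ univ.erase j, |(v j - v m)⁻¹| * (1 + |v m|) :=
    abs_coeff_prod_le (univ.erase j) (fun m => (v j - v m)⁻¹) (fun m => v m) i
  have hptr : ∀ m : Fin k, |(v j - v m)⁻¹| * (1 + |v m|)
      = (1 + (2:ℚ) ^ (m : ℕ)) / |(2:ℚ) ^ (j : ℕ) - 2 ^ (m : ℕ)| := by
    intro m
    rw [abs_inv, abs_of_pos (show (0:ℚ) < v m by positivity), inv_mul_eq_div]
  have h2 : ∏ m ∈ univ.erase j, (|(v j - v m)⁻¹| * (1 + |v m|))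
      = ∏ m : Fin k, (if (m : ℕ) = (j : ℕ) then 1
          else (1 + (2:ℚ) ^ (m : ℕ)) / |(2:ℚ) ^ (j : ℕ) - 2 ^ (m : ℕ)|) := by
    rw [← Finset.mul_prod_erase univ
      (fun m : Fin k => (if (m : ℕ) = (j : ℕ) then 1
        else (1 + (2:ℚ) ^ (m : ℕ)) / |(2:ℚ) ^ (j : ℕ) - 2 ^ (m : ℕ)|)) (mem_univ j)]
    rw [if_pos rfl, one_mul]
    apply prod_congr rfl
    intro m hm
    rw [hptr m, if_neg (fun hh => (mem_erase.mp hm).1 (Fin.ext hh))]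
  have h3 : ∏ m : Fin k, (if (m : ℕ) = (j : ℕ) then 1
        else (1 + (2:ℚ) ^ (m : ℕ)) / |(2:ℚ) ^ (j : ℕ) - 2 ^ (m : ℕ)|)
      = ∏ m ∈ range k, (if m = (j : ℕ) then 1
        else (1 + (2:ℚ) ^ m) / |(2:ℚ) ^ (j : ℕ) - 2 ^ m|) :=
    Fin.prod_univ_eq_prod_range
      (fun m => if m = (j : ℕ) then 1
        else (1 + (2:ℚ) ^ m) / |(2:ℚ) ^ (j : ℕ) - 2 ^ m|) k
  have h4 := prod_G_le (j : ℕ) k j.isLt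
  calc |(Lagrange.basis univ v j).coeff i|
      ≤ ∏ m ∈ univ.erase j, |(v j - v m)⁻¹| * (1 + |v m|) := hb
    _ ≤ 20 := by rw [h2, h3]; exact h4
    _ < 34 := by norm_num
end

section
/- For an integer k ≥ 2 and 0 ≤ i < k, define Q_k(i) = ∏_{0 ≤ j < k, j ≠ i} |2^j − 2^i|. Then Q_k(0) ≥ Q_k(1), and for 1 ≤ i ≤ k − 2 one has Q_k(i)/Q_k(i+1) = (2^{k−1} − 2^i)/((2^{i+1} − 1)·2^{k−2}) < 2/3; in particular Q_k(1) ≤ Q_k(2) ≤ ⋯ ≤ Q_k(k−1), so Q_k(i) is minimized at i = 1. -/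
/-!
Replace the base `2` by any `q > 1` and write `k = i + c + 1`, so that `c` counts the indices
above `i`. Pulling the smaller power out of each factor gives `Q_k(i) = q^(C(i,2) + i c) · P(i) · P(c)` with
`P(m) = ∏_{d < m} (q^(d+1) - 1)`, and comparing this at `(i, c + 1)` and `(i + 1, c)` leaves
`Q_k(i) · (q^(i+1) - 1) · q^c = Q_k(i+1) · (q^(c+1) - 1)`.
Everything follows from this identity: at `i = 0` it gives `Q_k(1) ≤ Q_k(0)`, and for `i ≥ 1`,
`q = 2` the ratio `(2^(c+1) - 1) / ((2^(i+1) - 1) 2^c)` is below `2 / 3` because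
`2^(i+1) - 1 ≥ 3`.
-/

open Finset

namespace PowGapProd

variable {q : ℝ}

noncomputable def powGapProd (q : ℝ) (k i : ℕ) : ℝ :=
  ∏ j ∈ (range k).erase i, |q ^ j - q ^ i|

noncomputable def prodPowSubOne (q : ℝ) (m : ℕ) : ℝ :=
  ∏ d ∈ range m, (q ^ (d + 1) - 1)

theorem prodPowSubOne_succ (q : ℝ) (m : ℕ) :
    prodPowSubOne q (m + 1) = prodPowSubOne q m * (q ^ (m + 1) - 1) :=
  prod_range_succ _ _

theorem prod_range_abs_pow_sub_pow (hq : 1 ≤ q) (i : ℕ) :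
    ∏ j ∈ range i, |q ^ j - q ^ i| = q ^ i.choose 2 * prodPowSubOne q i := by
  induction i with
  | zero => simp [prodPowSubOne]
  | succ i ih =>
    have hscale : ∀ j ∈ range i, |q ^ (j + 1) - q ^ (i + 1)| = q * |q ^ j - q ^ i| := by
      intro j _
      rw [pow_succ, pow_succ, ← sub_mul, abs_mul, abs_of_pos (by linarith : 0 < q), mul_comm]
    have hfirst : |q ^ 0 - q ^ (i + 1)| = q ^ (i + 1) - 1 := by
      rw [pow_zero, abs_sub_comm, abs_of_nonneg (by linarith [one_le_pow₀ (n := i + 1) hq])]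
    rw [prod_range_succ', prod_congr rfl hscale, prod_mul_distrib, prod_const, card_range, ih,
      hfirst, prodPowSubOne_succ, Nat.choose_succ_succ, Nat.choose_one_right]
    ring

theorem prod_range_abs_pow_add_sub_pow (hq : 1 ≤ q) (i c : ℕ) :
    ∏ j ∈ range c, |q ^ (i + 1 + j) - q ^ i| = q ^ (i * c) * prodPowSubOne q c := by
  have hfactor : ∀ j ∈ range c, |q ^ (i + 1 + j) - q ^ i| = q ^ i * (q ^ (j + 1) - 1) := by
    intro j _
    have hle : q ^ i ≤ q ^ (i + 1 + j) := pow_le_pow_right₀ hq (by omega)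
    rw [abs_of_nonneg (by linarith), mul_sub, mul_one, ← pow_add]
    ring_nf
  rw [prod_congr rfl hfactor, prod_mul_distrib, prod_const, card_range, ← pow_mul, prodPowSubOne]

theorem powGapProd_eq (hq : 1 ≤ q) (i c : ℕ) :
    powGapProd q (i + c + 1) i =
      q ^ (i.choose 2 + i * c) * prodPowSubOne q i * prodPowSubOne q c := by
  have hsplit : (range (i + c + 1)).erase i = range i ∪ Ico (i + 1) (i + c + 1) := by
    ext j
    simp only [mem_erase, mem_range, mem_union, mem_Ico]
    omega
  have hdisj : Disjoint (range i) (Ico (i + 1) (i + c + 1)) := by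
    simp only [disjoint_left, mem_range, mem_Ico]
    omega
  rw [powGapProd, hsplit, prod_union hdisj, prod_Ico_eq_prod_range,
    show i + c + 1 - (i + 1) = c by omega, prod_range_abs_pow_sub_pow hq,
    prod_range_abs_pow_add_sub_pow hq]
  ring

theorem powGapProd_mul_eq (hq : 1 ≤ q) (i c : ℕ) :
    powGapProd q (i + c + 2) i * ((q ^ (i + 1) - 1) * q ^ c) =
      powGapProd q (i + c + 2) (i + 1) * (q ^ (c + 1) - 1) := by
  have hi := powGapProd_eq hq i (c + 1)
  have hi' := powGapProd_eq hq (i + 1) c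
  rw [show i + (c + 1) + 1 = i + c + 2 by omega] at hi
  rw [show i + 1 + c + 1 = i + c + 2 by omega] at hi'
  rw [hi, hi', prodPowSubOne_succ, prodPowSubOne_succ, Nat.choose_succ_succ, Nat.choose_one_right]
  ring

theorem powGapProd_pos (hq : 1 < q) (k i : ℕ) : 0 < powGapProd q k i := by
  refine prod_pos fun j hj => abs_pos.2 (sub_ne_zero.2 fun h => (mem_erase.1 hj).1 ?_)
  exact pow_right_injective₀ (by linarith) hq.ne' h

theorem powGapProd_one_le_zero (hq : 1 < q) {k : ℕ} (hk : 2 ≤ k) :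
    powGapProd q k 1 ≤ powGapProd q k 0 := by
  obtain ⟨c, rfl⟩ : ∃ c, k = c + 2 := ⟨k - 2, by omega⟩
  have hstep := powGapProd_mul_eq hq.le 0 c
  have hpos := powGapProd_pos hq (c + 2) 1
  have hqc : 1 ≤ q ^ c := one_le_pow₀ hq.le
  have hgrow : (q - 1) * q ^ c ≤ q ^ (c + 1) - 1 := by rw [pow_succ]; linarith
  simp only [zero_add, pow_one] at hstep
  refine le_of_mul_le_mul_right ?_ (mul_pos (sub_pos.2 hq) (by positivity) : 0 < (q - 1) * q ^ c)
  rw [hstep]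
  exact mul_le_mul_of_nonneg_left hgrow hpos.le

theorem powGapProd_div_succ (hq : 1 < q) {k i : ℕ} (hik : i + 2 ≤ k) :
    powGapProd q k i / powGapProd q k (i + 1) =
      (q ^ (k - 1) - q ^ i) / ((q ^ (i + 1) - 1) * q ^ (k - 2)) := by
  obtain ⟨c, rfl⟩ : ∃ c, k = i + c + 2 := ⟨k - i - 2, by omega⟩
  have hden : (q ^ (i + 1) - 1) * q ^ (i + c) ≠ 0 :=
    mul_ne_zero (sub_ne_zero.2 (one_lt_pow₀ hq (by omega)).ne') (pow_ne_zero _ (by linarith))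
  rw [show i + c + 2 - 1 = i + (c + 1) by omega, show i + c + 2 - 2 = i + c by omega,
    div_eq_div_iff (powGapProd_pos hq _ _).ne' hden]
  linear_combination q ^ i * powGapProd_mul_eq hq.le i c

theorem two_pow_ratio_lt_two_thirds {k i : ℕ} (hi : 1 ≤ i) (hik : i + 2 ≤ k) :
    ((2 : ℝ) ^ (k - 1) - 2 ^ i) / ((2 ^ (i + 1) - 1) * 2 ^ (k - 2)) < 2 / 3 := by
  obtain ⟨c, rfl⟩ : ∃ c, k = i + c + 2 := ⟨k - i - 2, by omega⟩
  rw [show i + c + 2 - 1 = i + c + 1 by omega, show i + c + 2 - 2 = i + c by omega]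
  have ha : (2 : ℝ) ≤ 2 ^ i := le_self_pow₀ one_le_two (by omega)
  have hb : (1 : ℝ) ≤ 2 ^ c := one_le_pow₀ one_le_two
  rw [pow_succ, pow_add, pow_succ]
  generalize (2 : ℝ) ^ i = a, (2 : ℝ) ^ c = b at ha hb ⊢
  rw [div_lt_div_iff₀ (mul_pos (by linarith) (by nlinarith)) (by norm_num)]
  -- the difference of the two sides is `a (4 b (a - 2) + 3)`
  have hab : 0 ≤ a * b * (a - 2) :=
    mul_nonneg (mul_nonneg (by linarith) (by linarith)) (sub_nonneg.2 ha)
  nlinarith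

end PowGapProd

open PowGapProd in
/-- For `k ≥ 2` and `Q_k(i) = ∏_{0 ≤ j < k, j ≠ i} |2^j - 2^i|`: one has `Q_k(1) ≤ Q_k(0)`;
for `1 ≤ i ≤ k - 2`, `Q_k(i)/Q_k(i+1) = (2^(k-1) - 2^i)/((2^(i+1) - 1)·2^(k-2)) < 2/3`,
hence `Q_k(1) ≤ Q_k(2) ≤ ⋯ ≤ Q_k(k-1)`; in particular `Q_k` is minimized at `i = 1`. -/
theorem Qk_minimized_at_one (k : ℕ) (hk : 2 ≤ k) :
    let Q : ℕ → ℝ := fun i => ∏ j ∈ (Finset.range k).erase i, |(2 : ℝ) ^ j - 2 ^ i|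
    Q 1 ≤ Q 0 ∧
      (∀ i : ℕ, 1 ≤ i → i ≤ k - 2 →
        Q i / Q (i + 1) =
            ((2 : ℝ) ^ (k - 1) - 2 ^ i) / (((2 : ℝ) ^ (i + 1) - 1) * 2 ^ (k - 2)) ∧
          Q i / Q (i + 1) < 2 / 3) ∧
      (∀ i : ℕ, 1 ≤ i → i ≤ k - 2 → Q i ≤ Q (i + 1)) ∧
      (∀ i : ℕ, i < k → Q 1 ≤ Q i) := by
  intro Q
  have hratio (i : ℕ) (hi : 1 ≤ i) (hik : i ≤ k - 2) :
      powGapProd 2 k i / powGapProd 2 k (i + 1) =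
          ((2 : ℝ) ^ (k - 1) - 2 ^ i) / ((2 ^ (i + 1) - 1) * 2 ^ (k - 2)) ∧
        powGapProd 2 k i / powGapProd 2 k (i + 1) < 2 / 3 := by
    have heq := powGapProd_div_succ one_lt_two (show i + 2 ≤ k by omega)
    exact ⟨heq, heq ▸ two_pow_ratio_lt_two_thirds hi (by omega)⟩
  have hmono (i : ℕ) (hi : 1 ≤ i) (hik : i ≤ k - 2) :
      powGapProd 2 k i ≤ powGapProd 2 k (i + 1) := by
    have hlt := (hratio i hi hik).2
    rw [div_lt_iff₀ (powGapProd_pos one_lt_two k (i + 1))] at hlt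
    linarith [(powGapProd_pos one_lt_two k (i + 1)).le]
  refine ⟨powGapProd_one_le_zero one_lt_two hk, hratio, hmono, fun i hik => ?_⟩
  rcases Nat.eq_zero_or_pos i with rfl | hi
  · exact powGapProd_one_le_zero one_lt_two hk
  induction i, hi using Nat.le_induction with
  | base => exact le_rfl
  | succ n hn ih => exact (ih (by omega)).trans (hmono n hn (by omega))
end

section
/- Let b ≥ 2 and g ≥ 1 be integers with gcd(g, b) = 1, and let T_g^b = { k ≥ 1 : gcd((b^k − 1)/(b − 1), k) = g } (the set of k for which the gcd of the base-b k'th powers equals g). Then T_g^b is nonempty if and only if g = gcd( L_b(g), (b^{L_b(g)} − 1)/(b − 1) ), where L_b(x) = lcm(x, ord_x(b)) and ord_x(b) denotes the multiplicative order of b modulo x. -/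
open Finset

private lemma geom_mul (b n : ℕ) (hb : 2 ≤ b) :
    (∑ i ∈ range n, b ^ i) * (b - 1) = b ^ n - 1 := by
  induction n with
  | zero => simp
  | succ n ih =>
    rw [sum_range_succ, add_mul, ih]
    have h1 : 1 ≤ b ^ n := Nat.one_le_pow _ _ (by omega)
    have h3 : b ^ n * (b - 1) = b ^ (n + 1) - b ^ n := by
      rw [Nat.mul_sub, mul_one, pow_succ]
    have h2 : b ^ n ≤ b ^ (n + 1) := Nat.pow_le_pow_right (by omega) (by omega)
    omega

private lemma geom_eq (b n : ℕ) (hb : 2 ≤ b) :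
    (b ^ n - 1) / (b - 1) = ∑ i ∈ range n, b ^ i := by
  rw [← geom_mul b n hb, Nat.mul_div_cancel _ (by omega)]

private lemma geom_factor (b m t : ℕ) :
    ∑ i ∈ range (m * t), b ^ i = (∑ i ∈ range m, b ^ i) * ∑ j ∈ range t, (b ^ m) ^ j := by
  induction t with
  | zero => simp
  | succ t ih =>
    have : m * (t + 1) = m * t + m := by ring
    rw [this, Finset.sum_range_add, ih, sum_range_succ, mul_add, ← pow_mul]
    congr 1
    rw [Finset.sum_mul]
    apply Finset.sum_congr rfl
    intro i _
    rw [pow_add, mul_comm]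

private lemma geom_dvd (b m n : ℕ) (h : m ∣ n) :
    (∑ i ∈ range m, b ^ i) ∣ ∑ i ∈ range n, b ^ i := by
  obtain ⟨t, rfl⟩ := h
  rw [geom_factor]
  exact Dvd.intro _ rfl

private lemma pow_eq_one_iff' (M b n : ℕ) (hb : 1 ≤ b) :
    (b : ZMod M) ^ n = 1 ↔ M ∣ b ^ n - 1 := by
  rw [← Nat.cast_pow, ← Nat.cast_one (R := ZMod M), ZMod.natCast_eq_natCast_iff]
  rw [Nat.ModEq.comm, Nat.modEq_iff_dvd' (Nat.one_le_pow _ _ (by omega))]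

theorem test : True := trivial

private lemma le_padic (p a n : ℕ) (hp : p.Prime) (hn : n ≠ 0) (h : p ^ a ∣ n) :
    a ≤ padicValNat p n := by
  rw [← Nat.factorization_def _ hp]
  exact (hp.pow_dvd_iff_le_factorization hn).mp h

private lemma padic_mono (p m n : ℕ) (hp : p.Prime) (hm : m ≠ 0) (hn : n ≠ 0) (h : m ∣ n) :
    padicValNat p m ≤ padicValNat p n := by
  rw [← Nat.factorization_def _ hp, ← Nat.factorization_def _ hp]
  exact (Nat.factorization_le_iff_dvd hm hn).mpr h p

private lemma key_lte (b p a L : ℕ) (hb : 2 ≤ b) (hp : p.Prime) (hpb : ¬ p ∣ b)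
    (hpa : p ^ a ∣ L) (hpL : p ∣ b ^ L - 1) (hL : L ≠ 0) :
    p ^ a ∣ (b ^ L - 1) / (b - 1) := by
  rcases Nat.eq_zero_or_pos a with rfl | ha
  · simp
  haveI : Fact p.Prime := ⟨hp⟩
  have hD : (b - 1) ∣ b ^ L - 1 := by
    simpa using Nat.sub_dvd_pow_sub_pow b 1 L
  have hN0 : b ^ L - 1 ≠ 0 := by
    have : 2 ≤ b ^ L := le_trans hb (Nat.le_self_pow hL b)
    omega
  have hQ0 : (b ^ L - 1) / (b - 1) ≠ 0 := by
    intro h; apply hN0; rw [← Nat.div_mul_cancel hD, h, zero_mul]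
  rw [hp.pow_dvd_iff_le_factorization hQ0, Nat.factorization_div hD, Finsupp.tsub_apply,
    Nat.factorization_def _ hp, Nat.factorization_def _ hp]
  have hvL : a ≤ padicValNat p L := le_padic p a L hp hL hpa
  rcases eq_or_ne p 2 with rfl | hp2
  · have heven : Even L := by
      have : 2 ∣ L := dvd_trans (dvd_pow_self 2 (by omega : a ≠ 0)) hpa
      exact even_iff_two_dvd.mpr this
    have hbodd : ¬ (2 : ℕ) ∣ b := hpb
    have h2 := padicValNat.pow_two_sub_pow (x := b) (y := 1) (by omega)
      (by omega) hbodd hL heven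
    simp only [one_pow] at h2
    have hb1 : 1 ≤ padicValNat 2 (b + 1) := by
      apply le_padic 2 1 (b + 1) hp (by omega)
      rw [pow_one]; omega
    omega
  · have hodd : Odd p := hp.odd_of_ne_two hp2
    set e := orderOf (b : ZMod p) with he
    have hb0 : (b : ZMod p) ≠ 0 := by
      rw [Ne, ZMod.natCast_eq_zero_iff]; exact hpb
    have hbL : (b : ZMod p) ^ L = 1 := (pow_eq_one_iff' p b L (by omega)).mpr hpL
    have heL : e ∣ L := orderOf_dvd_of_pow_eq_one hbL
    have hep : e ∣ p - 1 := ZMod.orderOf_dvd_card_sub_one hb0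
    have hp3 : 3 ≤ p := by
      rcases hodd with ⟨t, ht⟩
      have := hp.two_le
      omega
    have he0 : e ≠ 0 := by
      intro h
      rw [h] at hep
      have := Nat.eq_zero_of_zero_dvd hep
      omega
    have hpe : ¬ p ∣ e := by
      intro h
      have h1 := Nat.le_of_dvd (Nat.pos_of_ne_zero he0) h
      have h2 := Nat.le_of_dvd (by omega) hep
      omega
    have hpaLe : p ^ a ∣ L / e := by
      have hcop : Nat.Coprime (p ^ a) e :=
        Nat.Coprime.pow_left a ((Nat.Prime.coprime_iff_not_dvd hp).mpr hpe)
      have hLeq : L = L / e * e := (Nat.div_mul_cancel heL).symm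
      exact hcop.dvd_of_dvd_mul_right (hLeq ▸ hpa)
    have hLe0 : L / e ≠ 0 := by
      have := Nat.div_pos (Nat.le_of_dvd (Nat.pos_of_ne_zero hL) heL) (Nat.pos_of_ne_zero he0)
      omega
    have hpe1 : p ∣ b ^ e - 1 := (pow_eq_one_iff' p b e (by omega)).mp (pow_orderOf_eq_one _)
    have hbe1 : 1 < b ^ e := Nat.one_lt_pow he0 (by omega)
    have hlte := padicValNat.pow_sub_pow (p := p) hodd (x := b ^ e) (y := 1)
      hbe1 (by simpa using hpe1) (fun h => hpb (hp.dvd_of_dvd_pow h)) hLe0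
    simp only [one_pow] at hlte
    have hxL : (b ^ e) ^ (L / e) = b ^ L := by rw [← pow_mul, Nat.mul_div_cancel' heL]
    rw [hxL] at hlte
    have hE0 : b ^ e - 1 ≠ 0 := by omega
    have h1 : padicValNat p (b - 1) ≤ padicValNat p (b ^ e - 1) :=
      padic_mono p _ _ hp (by omega) hE0 (by simpa using Nat.sub_dvd_pow_sub_pow b 1 e)
    have h2 : a ≤ padicValNat p (L / e) := le_padic p a (L / e) hp hLe0 hpaLe
    omega

private lemma g_dvd_geom (b g : ℕ) (hb : 2 ≤ b) (hg : 1 ≤ g) (hcop : Nat.Coprime g b)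
    (L : ℕ) (hgL : g ∣ L) (hordL : orderOf (b : ZMod g) ∣ L) (hL : L ≠ 0) :
    g ∣ (b ^ L - 1) / (b - 1) := by
  have hgN : g ∣ b ^ L - 1 := by
    have hone : (b : ZMod g) ^ L = 1 := by
      obtain ⟨t, rfl⟩ := hordL
      rw [pow_mul, pow_orderOf_eq_one, one_pow]
    exact (pow_eq_one_iff' g b L (by omega)).mp hone
  have hD : (b - 1) ∣ b ^ L - 1 := by simpa using Nat.sub_dvd_pow_sub_pow b 1 L
  have hN0 : b ^ L - 1 ≠ 0 := by
    have : 2 ≤ b ^ L := le_trans hb (Nat.le_self_pow hL b)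
    omega
  have hQ0 : (b ^ L - 1) / (b - 1) ≠ 0 := by
    intro h; apply hN0; rw [← Nat.div_mul_cancel hD, h, zero_mul]
  rw [← Nat.factorization_le_iff_dvd (by omega) hQ0]
  rw [Finsupp.le_def]
  intro p
  rcases Nat.eq_zero_or_pos (g.factorization p) with h0 | hpos
  · simp [h0]
  have hp : p.Prime := Nat.prime_of_mem_primeFactors
    ((Nat.support_factorization g) ▸ Finsupp.mem_support_iff.mpr (by omega))
  have hpg : p ∣ g := Nat.dvd_of_factorization_pos (by omega)
  have hpb : ¬ p ∣ b := fun h =>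
    hp.one_lt.ne' (Nat.eq_one_of_dvd_one (hcop ▸ Nat.dvd_gcd hpg h))
  have key := key_lte b p (g.factorization p) L hb hp hpb
    ((Nat.ordProj_dvd g p).trans hgL) (hpg.trans hgN) hL
  exact (hp.pow_dvd_iff_le_factorization hQ0).mp key

/-- For `b ≥ 2`, `g ≥ 1` with `gcd(g, b) = 1`, the set
`T_g^b = {k ≥ 1 : gcd((b^k - 1)/(b - 1), k) = g}` is nonempty iff
`g = gcd(L_b(g), (b^(L_b(g)) - 1)/(b - 1))`, where `L_b(x) = lcm(x, ord_x(b))`. -/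
theorem Tgb_nonempty_iff (b g : ℕ) (hb : 2 ≤ b) (hg : 1 ≤ g) (hcop : Nat.Coprime g b) :
    {k : ℕ | 1 ≤ k ∧ Nat.gcd ((b ^ k - 1) / (b - 1)) k = g}.Nonempty ↔
      g = Nat.gcd (Nat.lcm g (orderOf (b : ZMod g)))
        ((b ^ Nat.lcm g (orderOf (b : ZMod g)) - 1) / (b - 1)) := by
  haveI : NeZero g := ⟨by omega⟩
  set e := orderOf (b : ZMod g) with he
  have he0 : e ≠ 0 := by
    have hu : IsUnit (b : ZMod g) := (ZMod.isUnit_iff_coprime b g).mpr hcop.symm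
    obtain ⟨u, hu⟩ := hu
    rw [he, ← hu, orderOf_units]
    exact (orderOf_pos u).ne'
  set L := Nat.lcm g e with hLdef
  have hL0 : L ≠ 0 := Nat.lcm_ne_zero (by omega) he0
  have hgL : g ∣ L := Nat.dvd_lcm_left g e
  have heL : e ∣ L := Nat.dvd_lcm_right g e
  have hgRL : g ∣ (b ^ L - 1) / (b - 1) := g_dvd_geom b g hb hg hcop L hgL heL hL0
  constructor
  · rintro ⟨k, hk1, hk⟩
    have hgk : g ∣ k := hk ▸ Nat.gcd_dvd_right _ _
    have hgRk : g ∣ (b ^ k - 1) / (b - 1) := hk ▸ Nat.gcd_dvd_left _ _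
    have hDk : (b - 1) ∣ b ^ k - 1 := by simpa using Nat.sub_dvd_pow_sub_pow b 1 k
    have hgNk : g ∣ b ^ k - 1 := hgRk.trans (Nat.div_dvd_of_dvd hDk)
    have hek : e ∣ k := orderOf_dvd_of_pow_eq_one ((pow_eq_one_iff' g b k (by omega)).mpr hgNk)
    have hLk : L ∣ k := Nat.lcm_dvd hgk hek
    have hRR : (b ^ L - 1) / (b - 1) ∣ (b ^ k - 1) / (b - 1) := by
      rw [geom_eq b L hb, geom_eq b k hb]; exact geom_dvd b L k hLk
    apply Nat.dvd_antisymm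
    · exact Nat.dvd_gcd hgL hgRL
    · rw [← hk]
      exact Nat.dvd_gcd ((Nat.gcd_dvd_right _ _).trans hRR) ((Nat.gcd_dvd_left _ _).trans hLk)
  · intro h
    exact ⟨L, Nat.pos_of_ne_zero hL0, by rw [Nat.gcd_comm]; exact h.symm⟩
end
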